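/- arXiv:2303.13588 — 4 statements merged into one kernel-verified Lean document; each statement's English description precedes it below -/
import Mathlib

section
/- For x, y, z ∈ ℝ, z = max(x, 0) if and only if the three conditions z ≥ x, z ≥ 0, and z·(z − x) ≤ 0 all hold. -/
section ReLU

variable {α : Type*} [Ring α] [LinearOrder α]

theorem max_zero_mul_max_zero_sub_self (x : α) : max x 0 * (max x 0 - x) = 0 := by
  rcases le_total x 0 with hx | hx
  · rw [max_eq_right hx, zero_mul]
  · rw [max_eq_left hx, sub_self, mul_zero]

/-- The two slacks `z` and `z - x` are nonnegative, so `z * (z - x) ≤ 0` forces one of them to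
vanish. -/
theorem eq_max_zero_iff_complementarity [IsStrictOrderedRing α] (x z : α) :
    z = max x 0 ↔ x ≤ z ∧ 0 ≤ z ∧ z * (z - x) ≤ 0 := by
  constructor
  · rintro rfl
    exact ⟨le_max_left x 0, le_max_right x 0, (max_zero_mul_max_zero_sub_self x).le⟩
  · rintro ⟨hxz, hz, hcompl⟩
    have hslack : z * (z - x) = 0 := le_antisymm hcompl (mul_nonneg hz (sub_nonneg.2 hxz))
    refine le_antisymm ?_ (max_le hxz hz)
    rcases mul_eq_zero.1 hslack with hz0 | hzx
    · rw [hz0]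
      exact le_max_right x 0
    · rw [sub_eq_zero.1 hzx]
      exact le_max_left x 0

end ReLU

theorem relu_quadratic_encoding (x z : ℝ) :
    z = max x 0 ↔ (z ≥ x ∧ z ≥ 0 ∧ z * (z - x) ≤ 0) :=
  eq_max_zero_iff_complementarity x z
end

section
/- For x, z ∈ ℝ and θ > 0, z = ReLU_θ(x) (the clipped ReLU: θ if x ≥ θ, x if 0 ≤ x < θ, 0 if x < 0) if and only if there exists y ∈ ℝ satisfying the six quadratic inequalities: y ≥ θ − x, y ≥ 0, (y − (θ − x))·y ≤ 0, z ≥ θ − y, z ≥ 0, and (z − (θ − y))·z ≤ 0. -/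
/-! The conditions `b ≤ a`, `0 ≤ a`, `(a - b) * a ≤ 0` say that `a` is `ReLU b`: the product of
the two nonnegative factors must vanish. The clipped ReLU is `ReLU (θ - ReLU (θ - x))`, so encoding
both ReLUs this way, with `y = ReLU (θ - x)` as the auxiliary variable, gives the six inequalities. -/

theorem eq_max_zero_iff {R : Type*} [CommRing R] [LinearOrder R] [IsStrictOrderedRing R]
    {a b : R} : a = max b 0 ↔ b ≤ a ∧ 0 ≤ a ∧ (a - b) * a ≤ 0 := by
  constructor
  · rintro rfl
    refine ⟨le_max_left b 0, le_max_right b 0, ?_⟩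
    rcases le_total b 0 with hb | hb
    · simp [max_eq_right hb]
    · simp [max_eq_left hb]
  · rintro ⟨hba, ha, hprod⟩
    have hzero : (a - b) * a = 0 := le_antisymm hprod (mul_nonneg (sub_nonneg.2 hba) ha)
    rcases mul_eq_zero.1 hzero with h | rfl
    · obtain rfl := sub_eq_zero.1 h
      exact (max_eq_left ha).symm
    · exact (max_eq_right hba).symm

theorem clip_eq_max_sub_max_sub {θ x : ℝ} (hθ : 0 ≤ θ) :
    (if x ≥ θ then θ else if 0 ≤ x then x else 0) = max (θ - max (θ - x) 0) 0 := by
  split_ifs with hθx hx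
  · rw [max_eq_right (a := θ - x) (by linarith), sub_zero, max_eq_left hθ]
  · rw [max_eq_left (a := θ - x) (by linarith), sub_sub_cancel, max_eq_left hx]
  · rw [max_eq_left (a := θ - x) (by linarith), sub_sub_cancel, max_eq_right (by linarith)]

theorem clipped_relu_quadratic_encoding (x z θ : ℝ) (hθ : 0 < θ) :
    z = (if x ≥ θ then θ else if 0 ≤ x then x else 0) ↔
      ∃ y : ℝ, y ≥ θ - x ∧ y ≥ 0 ∧ (y - (θ - x)) * y ≤ 0 ∧
        z ≥ θ - y ∧ z ≥ 0 ∧ (z - (θ - y)) * z ≤ 0 := by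
  rw [clip_eq_max_sub_max_sub hθ.le]
  calc z = max (θ - max (θ - x) 0) 0 ↔ ∃ y, y = max (θ - x) 0 ∧ z = max (θ - y) 0 := by
        simp only [exists_eq_left]
    _ ↔ _ := by simp only [eq_max_zero_iff, ge_iff_le, and_assoc]
end

section
/- Let M be a real symmetric n×n matrix. Then min{n·λ_max(M + diag(h)) : Σh_i = 0} ≤ min{Σᵢ c_i + n·max(λ_max(M − diag(c)), 0) : c ∈ ℝⁿ, c_i ≥ 0 for all i}. -/
/-!
Given `c`, put `h = s - c` with `s` the mean of the `c i`. Then `M + diag h = (M - diag c) + s • 1`,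
so `n λ_max(M + diag h) = ∑ c i + n λ_max(M - diag c)`, which is at most the Raghunathan bound.
The left-hand infimum is a genuine one since `n λ_max(M + diag h) ≥ tr (M + diag h) = tr M`.
-/

open Matrix

namespace Matrix.IsHermitian

variable {𝕜 n : Type*} [RCLike 𝕜] [Fintype n] [DecidableEq n]

theorem iSup_eigenvalues_eq_sSup_spectrum {A : Matrix n n 𝕜} (hA : A.IsHermitian) :
    ⨆ i, hA.eigenvalues i = sSup (spectrum ℝ A) := by
  rw [hA.spectrum_real_eq_range_eigenvalues]; rfl

theorem iSup_eigenvalues_of_eq_add_algebraMap [Nonempty n] {A B : Matrix n n 𝕜}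
    (hA : A.IsHermitian) (hB : B.IsHermitian) {s : ℝ} (hBA : B = A + algebraMap ℝ _ s) :
    ⨆ i, hB.eigenvalues i = (⨆ i, hA.eigenvalues i) + s := by
  rw [iSup_eigenvalues_eq_sSup_spectrum, iSup_eigenvalues_eq_sSup_spectrum, hBA,
    ← spectrum.add_singleton_eq, hA.spectrum_real_eq_range_eigenvalues,
    csSup_add (Set.range_nonempty _) (Set.finite_range _).bddAbove (Set.singleton_nonempty s)
      bddAbove_singleton, csSup_singleton]

theorem trace_le_card_mul_iSup_eigenvalues {A : Matrix n n ℝ} (hA : A.IsHermitian) :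
    A.trace ≤ Fintype.card n * ⨆ i, hA.eigenvalues i := by
  rw [hA.trace_eq_sum_eigenvalues, ← nsmul_eq_mul]
  simp only [RCLike.ofReal_real_eq_id, id]
  exact Finset.sum_le_card_nsmul _ _ _ fun i _ => le_ciSup (Set.finite_range _).bddAbove i

theorem exists_sum_eq_zero_card_mul_iSup_eigenvalues_add_diagonal [Nonempty n]
    {M : Matrix n n ℝ} (hM : M.IsHermitian) (c : n → ℝ) :
    ∃ h : n → ℝ, ∑ i, h i = 0 ∧
      Fintype.card n * ⨆ i, (hM.add (isHermitian_diagonal h)).eigenvalues i =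
        ∑ i, c i + Fintype.card n * ⨆ i, (hM.sub (isHermitian_diagonal c)).eigenvalues i := by
  obtain ⟨s, hs⟩ : ∃ s : ℝ, Fintype.card n * s = ∑ i, c i :=
    ⟨_, mul_div_cancel₀ _ (Nat.cast_ne_zero.mpr Fintype.card_ne_zero)⟩
  have hshift : M + diagonal (algebraMap ℝ _ s - c) = M - diagonal c + algebraMap ℝ _ s := by
    rw [algebraMap_eq_diagonal, show diagonal (algebraMap ℝ (n → ℝ) s - c) =
      diagonal (algebraMap ℝ _ s) - diagonal c from (diagonal_sub _ _).symm]
    abel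
  refine ⟨algebraMap ℝ _ s - c, ?_, ?_⟩
  · simp [Finset.sum_sub_distrib, hs]
  · rw [iSup_eigenvalues_of_eq_add_algebraMap _ _ hshift, mul_add, hs, add_comm]

end Matrix.IsHermitian

/-- The corrected-average eigenvalue bound is at least as tight as the
Raghunathan et al. bound with nonnegative `c`. -/
theorem corrected_bound_tighter (n : ℕ) [NeZero n]
    (M : Matrix (Fin n) (Fin n) ℝ) (hM : M.IsHermitian) :
    sInf {r : ℝ | ∃ h : Fin n → ℝ, (∑ i, h i) = 0 ∧
        r = n * ⨆ i, (hM.add (Matrix.isHermitian_diagonal h)).eigenvalues i} ≤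
      sInf {r : ℝ | ∃ c : Fin n → ℝ, (∀ i, 0 ≤ c i) ∧
        r = (∑ i, c i) +
          n * max (⨆ i, (hM.sub (Matrix.isHermitian_diagonal c)).eigenvalues i) 0} := by
  have hbdd : BddBelow {r : ℝ | ∃ h : Fin n → ℝ, (∑ i, h i) = 0 ∧
      r = n * ⨆ i, (hM.add (Matrix.isHermitian_diagonal h)).eigenvalues i} := by
    refine ⟨M.trace, ?_⟩
    rintro _ ⟨h, hh, rfl⟩
    simpa [trace_add, hh] using (hM.add (isHermitian_diagonal h)).trace_le_card_mul_iSup_eigenvalues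
  refine le_csInf ⟨_, 0, fun _ => le_rfl, rfl⟩ ?_
  rintro _ ⟨c, -, rfl⟩
  obtain ⟨h, hh, heq⟩ := hM.exists_sum_eq_zero_card_mul_iSup_eigenvalues_add_diagonal c
  rw [Fintype.card_fin] at heq
  refine (csInf_le hbdd ⟨h, hh, heq.symm⟩).trans ?_
  gcongr
  exact le_max_left _ _
end

section
/- For M = [[1, 0], [0, −1]], the value min{2·λ_max(M + diag(h)) : h₁ + h₂ = 0} equals 0, while for every c ∈ ℝ² with c₁, c₂ ≥ 0, c₁ + c₂ + 2·max(λ_max(M − diag(c)), 0) > 0. -/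
/-!
Both matrices are diagonal, so `λ_max` is their largest diagonal entry. Under `h₁ + h₂ = 0` the
entries of `M + diag h` are `1 + h₁` and `-(1 + h₁)`, whose maximum is nonnegative and vanishes at
`h = (-1, 1)`. For `c ≥ 0` the entry `1 - c₁` of `M - diag c` forces the second bound to be `≥ 1`.
-/

open Matrix

theorem Matrix.IsHermitian.iSup_eigenvalues_of_eq_diagonal {n : Type*} [Fintype n]
    [DecidableEq n] {A : Matrix n n ℝ} (hA : A.IsHermitian) {d : n → ℝ} (hAd : A = diagonal d) :
    ⨆ i, hA.eigenvalues i = ⨆ i, d i := by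
  rw [iSup, ← hA.spectrum_real_eq_range_eigenvalues, hAd, spectrum_diagonal]
  rfl

theorem ciSup_fin_two {α : Type*} [ConditionallyCompleteLinearOrder α] (f : Fin 2 → α) :
    ⨆ i, f i = max (f 0) (f 1) :=
  le_antisymm (ciSup_le <| Fin.forall_fin_two.2 ⟨le_max_left _ _, le_max_right _ _⟩)
    (max_le (le_ciSup (Set.finite_range f).bddAbove 0) (le_ciSup (Set.finite_range f).bddAbove 1))

/-- On `M = diag(1, -1)`, the corrected-average bound equals `0`, while the
bound with nonnegative `c` is always strictly positive. -/
theorem corrected_bound_strictly_tighter :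
    sInf {r : ℝ | ∃ h : Fin 2 → ℝ, h 0 + h 1 = 0 ∧
        r = 2 * ⨆ i,
          ((Matrix.isHermitian_diagonal (![1, -1] : Fin 2 → ℝ)).add
            (Matrix.isHermitian_diagonal h)).eigenvalues i} = 0 ∧
    ∀ c : Fin 2 → ℝ, 0 ≤ c 0 → 0 ≤ c 1 →
      0 < c 0 + c 1 + 2 * max (⨆ i,
        ((Matrix.isHermitian_diagonal (![1, -1] : Fin 2 → ℝ)).sub
          (Matrix.isHermitian_diagonal c)).eigenvalues i) 0 := by
  have lambda_max_add (h : Fin 2 → ℝ) :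
      ⨆ i, ((isHermitian_diagonal (![1, -1] : Fin 2 → ℝ)).add
        (isHermitian_diagonal h)).eigenvalues i = max (1 + h 0) (-1 + h 1) := by
    rw [IsHermitian.iSup_eigenvalues_of_eq_diagonal _ (diagonal_add _ _), ciSup_fin_two]
    simp
  have lambda_max_sub (c : Fin 2 → ℝ) :
      ⨆ i, ((isHermitian_diagonal (![1, -1] : Fin 2 → ℝ)).sub
        (isHermitian_diagonal c)).eigenvalues i = max (1 - c 0) (-1 - c 1) := by
    rw [IsHermitian.iSup_eigenvalues_of_eq_diagonal _ (diagonal_sub _ _), ciSup_fin_two]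
    simp
  simp_rw [lambda_max_add, lambda_max_sub]
  refine ⟨IsLeast.csInf_eq ⟨⟨![-1, 1], by norm_num, by norm_num⟩, ?_⟩, fun c _ hc1 ↦ ?_⟩
  · rintro r ⟨h, hsum, rfl⟩
    linarith [le_max_left (1 + h 0) (-1 + h 1), le_max_right (1 + h 0) (-1 + h 1)]
  · linarith [le_max_left (1 - c 0) (-1 - c 1),
      le_max_left (max (1 - c 0) (-1 - c 1)) 0, le_max_right (max (1 - c 0) (-1 - c 1)) 0]
end
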